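/- Let n ≥ 2, let p ≥ 1, and let f ∈ ℝ^n have at least two nonzero coordinates. Let e_1, …, e_n be independent rate-1 exponential random variables, define z_i = |f_i| / e_i^{1/p}, and let Z_(1) ≥ Z_(2) denote the largest and second-largest values among z_1, …, z_n. Then for every ε > 0, Pr[Z_(1)^p ≤ (1+ε)·Z_(2)^p] ≤ ε; consequently, for every ε ∈ (0,1], Pr[Z_(1) ≤ (1+ε)·Z_(2)] ≤ (1+ε)^p − 1. -/

import Mathlib

/-
Put `w i = |f i| ^ p`, so that `z i ^ p = w i / e i`. Conditioning on `e k` and using the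
exponential tails of the other coordinates, the probability that `w k / e k` exceeds `c` times
every other `w j / e j` is `w k / (w k + c (∑ w - w k)) ≥ w k / (c ∑ w)`. For `c ≥ 1` these
events are disjoint, so with probability at least `1 / c` some `z k ^ p` exceeds `c` times all the
others, and then `Z₁ ^ p > c Z₂ ^ p`. Hence `Pr[Z₁ ^ p ≤ c Z₂ ^ p] ≤ 1 - 1 / c ≤ c - 1`, and both
claims follow, with `c = 1 + ε` and with `c = (1 + ε) ^ p`.
-/

open MeasureTheory ProbabilityTheory Real Set

namespace ProbabilityTheory

variable {r : ℝ}

lemma expMeasure_Iic (hr : 0 < r) (a : ℝ) :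
    expMeasure r (Iic a) = ENNReal.ofReal (if 0 ≤ a then 1 - exp (-(r * a)) else 0) := by
  have := isProbabilityMeasure_expMeasure hr
  rw [← ofReal_cdf, cdf_expMeasure_eq hr]

lemma expMeasure_Ioi (hr : 0 < r) {a : ℝ} (ha : 0 ≤ a) :
    expMeasure r (Ioi a) = ENNReal.ofReal (exp (-(r * a))) := by
  have := isProbabilityMeasure_expMeasure hr
  have hcdf : 0 ≤ 1 - exp (-(r * a)) := sub_nonneg.2 (exp_le_one_iff.2 (by nlinarith))
  rw [← compl_Iic, prob_compl_eq_one_sub measurableSet_Iic, expMeasure_Iic hr, if_pos ha,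
    ← ENNReal.ofReal_one, ← ENNReal.ofReal_sub _ hcdf, sub_sub_cancel]

lemma ae_pos_expMeasure (hr : 0 < r) : ∀ᵐ x ∂expMeasure r, 0 < x := by
  have hnonpos : {x : ℝ | ¬0 < x} = Iic 0 := by ext; simp
  rw [ae_iff, hnonpos, expMeasure_Iic hr]
  simp

lemma lintegral_exp_neg_mul_expMeasure (hr : 0 ≤ r) {s : ℝ} (hrs : 0 < r + s) :
    ∫⁻ x, ENNReal.ofReal (exp (-(s * x))) ∂expMeasure r = ENNReal.ofReal (r / (r + s)) := by
  have hdensity (x : ℝ) : exponentialPDF r x * ENNReal.ofReal (exp (-(s * x)))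
      = ENNReal.ofReal (r / (r + s)) * exponentialPDF (r + s) x := by
    rcases lt_or_ge x 0 with hx | hx
    · simp [exponentialPDF_of_neg hx]
    · rw [exponentialPDF_of_nonneg hx, exponentialPDF_of_nonneg hx,
        ← ENNReal.ofReal_mul (by positivity), ← ENNReal.ofReal_mul (by positivity)]
      congr 1
      field_simp
      rw [mul_assoc, ← Real.exp_add]
      ring_nf
  have hmeas (r : ℝ) : Measurable (exponentialPDF r) :=
    (measurable_exponentialPDFReal r).ennreal_ofReal
  rw [show expMeasure r = volume.withDensity (exponentialPDF r) from rfl,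
    lintegral_withDensity_eq_lintegral_mul _ (hmeas r) (by fun_prop)]
  simp only [Pi.mul_apply, hdensity]
  rw [lintegral_const_mul _ (hmeas _), lintegral_exponentialPDF_eq_one hrs, mul_one]

section LeadEvent

variable {Ω ι : Type*} [MeasurableSpace Ω] {μ : Measure Ω} {X : ι → Ω → ℝ} {c : ℝ} {w : ι → ℝ}

lemma ae_forall_pos_of_map_eq_expMeasure [Countable ι] (hX : ∀ i, Measurable (X i))
    (hdist : ∀ i, μ.map (X i) = expMeasure r) (hr : 0 < r) : ∀ᵐ ω ∂μ, ∀ i, 0 < X i ω :=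
  ae_all_iff.2 fun i => ae_of_ae_map (hX i).aemeasurable ((hdist i).symm ▸ ae_pos_expMeasure hr)

def leadEvent (c : ℝ) (w : ι → ℝ) (X : ι → Ω → ℝ) (k : ι) : Set Ω :=
  {ω | ∀ j ≠ k, c * (w j / X j ω) < w k / X k ω}

lemma aedisjoint_leadEvent (hX0 : ∀ᵐ ω ∂μ, ∀ i, 0 ≤ X i ω) (hw : ∀ i, 0 ≤ w i) (hc : 1 ≤ c)
    {k l : ι} (hkl : k ≠ l) : AEDisjoint μ (leadEvent c w X k) (leadEvent c w X l) := by
  refine measure_eq_zero_iff_ae_notMem.2 (hX0.mono fun ω hω ⟨hk, hl⟩ => ?_)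
  have h₁ := hk l hkl.symm
  have h₂ := hl k hkl
  have := div_nonneg (hw k) (hω k)
  have := div_nonneg (hw l) (hω l)
  nlinarith

lemma measurableSet_leadEvent [Countable ι] (hX : ∀ i, Measurable (X i)) (k : ι) :
    MeasurableSet (leadEvent c w X k) := by
  simp only [leadEvent, ofPred_forall]
  exact .iInter fun j => .iInter fun _ => measurableSet_lt
    ((measurable_const.div (hX j)).const_mul c) (measurable_const.div (hX k))

end LeadEvent

section Independent

variable {Ω ι : Type*} [MeasurableSpace Ω] {μ : Measure Ω} [IsProbabilityMeasure μ]
  [Fintype ι] {X : ι → Ω → ℝ} {c : ℝ} {w : ι → ℝ}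

lemma measure_forall_lt_eq_lintegral_prod [DecidableEq ι] (hX : ∀ i, Measurable (X i))
    (hindep : iIndepFun X μ) (k : ι) {g : ι → ℝ → ℝ} (hg : ∀ j, Measurable (g j)) :
    μ {ω | ∀ j ≠ k, g j (X k ω) < X j ω}
      = ∫⁻ x, ∏ j ∈ Finset.univ.erase k, μ {ω | g j x < X j ω} ∂μ.map (X k) := by
  set T := Finset.univ.erase k
  let Y : Ω → T → ℝ := fun ω j => X j ω
  have hY : Measurable Y := measurable_pi_lambda _ fun j => hX j
  have hindepY : IndepFun (X k) Y μ :=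
    (hindep.indepFun_finset {k} T (by simp [T]) hX).comp
      (φ := fun v : ({k} : Finset ι) → ℝ => v ⟨k, Finset.mem_singleton_self k⟩)
      (measurable_pi_apply _) measurable_id
  let E : Set (ℝ × (T → ℝ)) := {q | ∀ j : T, g j q.1 < q.2 j}
  have hE : MeasurableSet E := by
    simp only [E, ofPred_forall]
    exact MeasurableSet.iInter fun j => measurableSet_lt ((hg j).comp measurable_fst)
      ((measurable_pi_apply j).comp measurable_snd)
  have hslice (x : ℝ) : μ.map Y (Prod.mk x ⁻¹' E) = ∏ j ∈ T, μ {ω | g j x < X j ω} := by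
    have hpre : Y ⁻¹' (Prod.mk x ⁻¹' E) = ⋂ j ∈ T, X j ⁻¹' Ioi (g j x) := by
      ext ω; simp [E, Y]
    rw [Measure.map_apply hY (measurable_prodMk_left hE), hpre,
      hindep.measure_inter_preimage_eq_mul T fun _ _ => measurableSet_Ioi]
    rfl
  have hpre : {ω | ∀ j ≠ k, g j (X k ω) < X j ω} = (fun ω => (X k ω, Y ω)) ⁻¹' E := by
    ext ω; simp [E, Y, T]
  have : IsProbabilityMeasure (μ.map Y) := Measure.isProbabilityMeasure_map hY.aemeasurable
  rw [hpre, ← Measure.map_apply ((hX k).prodMk hY) hE,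
    (indepFun_iff_map_prod_eq_prod_map_map (hX k).aemeasurable hY.aemeasurable).1 hindepY,
    Measure.prod_apply hE]
  simp only [hslice]

lemma measure_forall_mul_lt_of_iIndepFun_expMeasure [DecidableEq ι] (hX : ∀ i, Measurable (X i))
    (hindep : iIndepFun X μ) (hdist : ∀ i, μ.map (X i) = expMeasure r) (hr : 0 < r) (k : ι)
    {t : ι → ℝ} (ht : ∀ j, 0 ≤ t j) :
    μ {ω | ∀ j ≠ k, t j * X k ω < X j ω}
      = ENNReal.ofReal (1 / (1 + ∑ j ∈ Finset.univ.erase k, t j)) := by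
  set s := ∑ j ∈ Finset.univ.erase k, t j
  have hs : 0 ≤ s := Finset.sum_nonneg fun j _ => ht j
  have hslice : ∀ᵐ x ∂expMeasure r, ∏ j ∈ Finset.univ.erase k, μ {ω | t j * x < X j ω}
      = ENNReal.ofReal (exp (-(r * s * x))) := by
    filter_upwards [ae_pos_expMeasure hr] with x hx
    have htail (j : ι) : μ {ω | t j * x < X j ω} = ENNReal.ofReal (exp (-(r * (t j * x)))) := by
      rw [← expMeasure_Ioi hr (mul_nonneg (ht j) hx.le), ← hdist j,
        Measure.map_apply (hX j) measurableSet_Ioi]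
      rfl
    simp only [htail]
    rw [← ENNReal.ofReal_prod_of_nonneg fun _ _ => (exp_pos _).le, ← Real.exp_sum]
    simp only [s, Finset.mul_sum, Finset.sum_mul, Finset.sum_neg_distrib, mul_assoc]
  rw [measure_forall_lt_eq_lintegral_prod hX hindep k (fun j => measurable_const_mul (t j)),
    hdist k, lintegral_congr_ae hslice,
    lintegral_exp_neg_mul_expMeasure hr.le (by positivity)]
  congr 1
  field_simp

lemma ofReal_div_le_measure_leadEvent (hX : ∀ i, Measurable (X i)) (hindep : iIndepFun X μ)
    (hdist : ∀ i, μ.map (X i) = expMeasure r) (hr : 0 < r) (hw : ∀ i, 0 ≤ w i) (hc : 1 ≤ c)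
    (k : ι) : ENNReal.ofReal (w k / (c * ∑ i, w i)) ≤ μ (leadEvent c w X k) := by
  classical
  rcases (hw k).eq_or_lt with hk | hk
  · simp [← hk]
  set Λ := ∑ i, w i
  have hkΛ : w k ≤ Λ := Finset.single_le_sum (fun i _ => hw i) (Finset.mem_univ k)
  have hrest : ∑ j ∈ Finset.univ.erase k, c * w j / w k = c * (Λ - w k) / w k := by
    rw [← Finset.sum_div, ← Finset.mul_sum, Finset.sum_erase_eq_sub (Finset.mem_univ k)]
  calc ENNReal.ofReal (w k / (c * Λ)) ≤ ENNReal.ofReal (1 / (1 + c * (Λ - w k) / w k)) := by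
        apply ENNReal.ofReal_le_ofReal
        rw [one_add_div hk.ne', one_div_div]
        gcongr
        nlinarith
    _ = μ {ω | ∀ j ≠ k, c * w j / w k * X k ω < X j ω} := by
        rw [measure_forall_mul_lt_of_iIndepFun_expMeasure hX hindep hdist hr k
          (fun j => div_nonneg (mul_nonneg (by linarith) (hw j)) hk.le), hrest]
    _ ≤ μ (leadEvent c w X k) := by
        refine measure_mono_ae ((ae_forall_pos_of_map_eq_expMeasure hX hdist hr).mono
          fun ω hω h j hj => ?_)
        have := h j hj
        rw [div_mul_eq_mul_div, div_lt_iff₀ hk] at this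
        rw [← mul_div_assoc, div_lt_div_iff₀ (hω j) (hω k)]
        linarith

lemma measure_compl_iUnion_leadEvent_le (hX : ∀ i, Measurable (X i)) (hindep : iIndepFun X μ)
    (hdist : ∀ i, μ.map (X i) = expMeasure r) (hr : 0 < r) (hw : ∀ i, 0 ≤ w i)
    (hΛ : 0 < ∑ i, w i) (hc : 1 ≤ c) :
    μ (⋃ k, leadEvent c w X k)ᶜ ≤ ENNReal.ofReal (1 - c⁻¹) := by
  have hX0 : ∀ᵐ ω ∂μ, ∀ i, 0 ≤ X i ω :=
    (ae_forall_pos_of_map_eq_expMeasure hX hdist hr).mono fun _ h i => (h i).le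
  have hunion : ENNReal.ofReal c⁻¹ ≤ μ (⋃ k, leadEvent c w X k) := by
    rw [measure_iUnion₀ (fun k l hkl => aedisjoint_leadEvent hX0 hw hc hkl)
      (fun k => (measurableSet_leadEvent hX k).nullMeasurableSet), tsum_fintype]
    calc ENNReal.ofReal c⁻¹ = ∑ k, ENNReal.ofReal (w k / (c * ∑ i, w i)) := by
          rw [← ENNReal.ofReal_sum_of_nonneg fun k _ => div_nonneg (hw k) (by positivity),
            ← Finset.sum_div]
          field_simp
      _ ≤ ∑ k, μ (leadEvent c w X k) :=
          Finset.sum_le_sum fun k _ => ofReal_div_le_measure_leadEvent hX hindep hdist hr hw hc k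
  rw [prob_compl_eq_one_sub (.iUnion fun k => measurableSet_leadEvent hX k),
    ENNReal.ofReal_sub _ (by positivity), ENNReal.ofReal_one]
  exact tsub_le_tsub_left hunion 1

end Independent

end ProbabilityTheory

section SecondMax

variable {ι : Type*}

/-- The second-largest value of `z` when `ι` has at least two elements; `0` when `ι` is a
singleton, since then the inner supremum is over the empty type. -/
noncomputable def secondMax (z : ι → ℝ) : ℝ := ⨅ i, ⨆ j : {j // j ≠ i}, z j.1

lemma secondMax_nonneg {z : ι → ℝ} (hz : ∀ i, 0 ≤ z i) : 0 ≤ secondMax z :=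
  Real.iInf_nonneg fun _ => Real.iSup_nonneg fun j => hz j.1

lemma exists_ne_secondMax_le [Finite ι] [Nontrivial ι] (z : ι → ℝ) (k : ι) :
    ∃ j ≠ k, secondMax z ≤ z j := by
  have : Nonempty {j // j ≠ k} := nonempty_subtype.2 (exists_ne k)
  obtain ⟨⟨j, hj⟩, hsup⟩ := exists_eq_ciSup_of_finite (f := fun j : {j // j ≠ k} => z j.1)
  exact ⟨j, hj, hsup ▸ ciInf_le (Set.finite_range _).bddBelow k⟩

lemma mul_rpow_secondMax_lt_rpow_iSup [Finite ι] [Nontrivial ι] {z : ι → ℝ}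
    (hz : ∀ i, 0 ≤ z i) {c p : ℝ} (hc : 0 ≤ c) (hp : 0 ≤ p) {k : ι}
    (hk : ∀ j ≠ k, c * z j ^ p < z k ^ p) : c * secondMax z ^ p < (⨆ i, z i) ^ p := by
  obtain ⟨j, hjk, hj⟩ := exists_ne_secondMax_le z k
  calc c * secondMax z ^ p ≤ c * z j ^ p := by gcongr; exact secondMax_nonneg hz
    _ < z k ^ p := hk j hjk
    _ ≤ (⨆ i, z i) ^ p := by
        gcongr
        exacts [hz k, le_ciSup (Set.finite_range z).bddAbove k]

end SecondMax

lemma Real.div_rpow_one_div_rpow {a x p : ℝ} (ha : 0 ≤ a) (hx : 0 ≤ x) (hp : p ≠ 0) :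
    (a / x ^ (1 / p)) ^ p = a ^ p / x := by
  rw [div_rpow ha (rpow_nonneg hx _), one_div, rpow_inv_rpow hx hp]

theorem measure_rpow_iSup_le_mul_rpow_secondMax_le {Ω ι : Type*} [MeasurableSpace Ω]
    {μ : Measure Ω} [IsProbabilityMeasure μ] [Fintype ι] [Nontrivial ι] {e : ι → Ω → ℝ} {r : ℝ}
    (hmeas : ∀ i, Measurable (e i)) (hindep : iIndepFun e μ)
    (hdist : ∀ i, μ.map (e i) = expMeasure r) (hr : 0 < r) {p : ℝ} (hp : 0 < p) {f : ι → ℝ}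
    (hf : ∃ i, f i ≠ 0) {c : ℝ} (hc : 1 ≤ c) :
    μ {ω | (⨆ i, |f i| / e i ω ^ (1 / p)) ^ p ≤
        c * secondMax (fun i => |f i| / e i ω ^ (1 / p)) ^ p} ≤ ENNReal.ofReal (1 - c⁻¹) := by
  obtain ⟨i₀, hi₀⟩ := hf
  let w (i : ι) : ℝ := |f i| ^ p
  have hw (i : ι) : 0 ≤ w i := by positivity
  have hΛ : 0 < ∑ i, w i :=
    Finset.sum_pos' (fun i _ => hw i) ⟨i₀, Finset.mem_univ _, by positivity⟩
  refine (measure_mono_ae ((ae_forall_pos_of_map_eq_expMeasure hmeas hdist hr).mono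
    fun ω hω hA hlead => ?_)).trans
    (measure_compl_iUnion_leadEvent_le hmeas hindep hdist hr hw hΛ hc)
  obtain ⟨k, hk⟩ := mem_iUnion.1 hlead
  refine (mul_rpow_secondMax_lt_rpow_iSup (c := c) (k := k)
    (fun i => div_nonneg (abs_nonneg _) (rpow_nonneg (hω i).le _)) (by linarith) hp.le
    fun j hj => ?_).not_ge hA
  simpa only [div_rpow_one_div_rpow (abs_nonneg _) (hω _).le hp.ne'] using hk j hj

theorem exponential_anti_concentration_general
    {Ω : Type*} [MeasurableSpace Ω] (μ : Measure Ω) [IsProbabilityMeasure μ]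
    (n : ℕ) (p : ℝ) (hp : 1 ≤ p)
    (f : Fin n → ℝ) (hf : ∃ i j : Fin n, i ≠ j ∧ f i ≠ 0 ∧ f j ≠ 0)
    (e : Fin n → Ω → ℝ) (hmeas : ∀ i, Measurable (e i))
    (hindep : iIndepFun e μ)
    (hdist : ∀ i, Measure.map (e i) μ = expMeasure 1) :
    (∀ ε : ℝ, 0 < ε →
      μ {ω | (⨆ i : Fin n, |f i| / (e i ω) ^ (1 / p)) ^ p ≤
          (1 + ε) *
            (⨅ i : Fin n, ⨆ j : {j : Fin n // j ≠ i}, |f j.1| / (e j.1 ω) ^ (1 / p)) ^ p}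
        ≤ ENNReal.ofReal ε) ∧
    (∀ ε : ℝ, 0 < ε → ε ≤ 1 →
      μ {ω | (⨆ i : Fin n, |f i| / (e i ω) ^ (1 / p)) ≤
          (1 + ε) *
            (⨅ i : Fin n, ⨆ j : {j : Fin n // j ≠ i}, |f j.1| / (e j.1 ω) ^ (1 / p))}
        ≤ ENNReal.ofReal ((1 + ε) ^ p - 1)) := by
  obtain ⟨i₀, j₀, hij, hfi₀, -⟩ := hf
  have : Nontrivial (Fin n) := ⟨⟨i₀, j₀, hij⟩⟩
  have hp₀ : 0 < p := by linarith
  have hbound {c : ℝ} (hc : 1 ≤ c) :=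
    measure_rpow_iSup_le_mul_rpow_secondMax_le hmeas hindep hdist one_pos hp₀ ⟨i₀, hfi₀⟩ hc
  have one_sub_inv_le (x : ℝ) (hx : 0 < x) : 1 - x⁻¹ ≤ x - 1 :=
    (one_sub_inv_le_log_of_pos hx).trans (log_le_sub_one_of_pos hx)
  refine ⟨fun ε hε => (hbound (by linarith)).trans (ENNReal.ofReal_le_ofReal ?_), fun ε hε _ => ?_⟩
  · simpa using one_sub_inv_le (1 + ε) (by linarith)
  have hεp : 1 ≤ (1 + ε) ^ p := one_le_rpow (by linarith) hp₀.le
  refine (measure_mono_ae ((ae_forall_pos_of_map_eq_expMeasure hmeas hdist one_pos).mono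
    fun ω hω hA => ?_)).trans
    ((hbound hεp).trans (ENNReal.ofReal_le_ofReal (one_sub_inv_le _ (by linarith))))
  have hz (i : Fin n) : 0 ≤ |f i| / e i ω ^ (1 / p) :=
    div_nonneg (abs_nonneg _) (rpow_nonneg (hω i).le _)
  exact (rpow_le_rpow (Real.iSup_nonneg hz) hA hp₀.le).trans_eq
    (mul_rpow (by linarith) (secondMax_nonneg hz))

/-- **anti-concentration.** Let `n ≥ 2`, `p ≥ 1`, and let `f ∈ ℝⁿ` have at
least two nonzero coordinates.  With `z i = |f i| / (e i) ^ (1/p)` built from independent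
rate-1 exponentials, let `Z₁` be the largest and `Z₂` the second-largest value among the
`z i` (the second-largest being `⨅ i, ⨆ j ≠ i, z j`).  Then for every `ε > 0`,
`Pr[Z₁ ^ p ≤ (1+ε) · Z₂ ^ p] ≤ ε`, and consequently for every `ε ∈ (0,1]`,
`Pr[Z₁ ≤ (1+ε) · Z₂] ≤ (1+ε) ^ p − 1`. -/
theorem exponential_anti_concentration
    {Ω : Type*} [MeasurableSpace Ω] (μ : Measure Ω) [IsProbabilityMeasure μ]
    (n : ℕ) (hn : 2 ≤ n) (p : ℝ) (hp : 1 ≤ p)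
    (f : Fin n → ℝ) (hf : ∃ i j : Fin n, i ≠ j ∧ f i ≠ 0 ∧ f j ≠ 0)
    (e : Fin n → Ω → ℝ) (hmeas : ∀ i, Measurable (e i))
    (hindep : iIndepFun e μ)
    (hdist : ∀ i, Measure.map (e i) μ = expMeasure 1) :
    (∀ ε : ℝ, 0 < ε →
      μ {ω | (⨆ i : Fin n, |f i| / (e i ω) ^ (1 / p)) ^ p ≤
          (1 + ε) *
            (⨅ i : Fin n, ⨆ j : {j : Fin n // j ≠ i}, |f j.1| / (e j.1 ω) ^ (1 / p)) ^ p}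
        ≤ ENNReal.ofReal ε) ∧
    (∀ ε : ℝ, 0 < ε → ε ≤ 1 →
      μ {ω | (⨆ i : Fin n, |f i| / (e i ω) ^ (1 / p)) ≤
          (1 + ε) *
            (⨅ i : Fin n, ⨆ j : {j : Fin n // j ≠ i}, |f j.1| / (e j.1 ω) ^ (1 / p))}
        ≤ ENNReal.ofReal ((1 + ε) ^ p - 1)) :=
  exponential_anti_concentration_general μ n p hp f hf e hmeas hindep hdist
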